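/- The commutative algebra over ℚ(q) generated by elements U, K, H subject to the relations U² = ([10][6][2]/([5][3]))U, UH = [7]U, UK = 0, H² = [3] + ([4]/[2])H + [4]U + [4]K, HK = −[5]K, K² = ([2]²[6]/[3])K is a free module of rank 4 with basis {1, U, K, H}. -/

import Mathlib

/-- The variable `q`, the generator of the field of rational functions `ℚ(q)`. -/
noncomputable def q : RatFunc ℚ := RatFunc.X

/-- The quantum integer `[n] = (q^n - q^{-n})/(q - q⁻¹)` in `ℚ(q)`. -/
noncomputable def qi (n : ℤ) : RatFunc ℚ := (q ^ n - q ^ (-n)) / (q - q⁻¹)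

open MvPolynomial in
/-- The ideal of relations defining the commutative algebra `A(2)`; the variables
`X 0`, `X 1`, `X 2` stand for `U`, `K`, `H`. -/
noncomputable def A2rel : Ideal (MvPolynomial (Fin 3) (RatFunc ℚ)) :=
  Ideal.span
    { X 0 * X 0 - C (qi 10 * qi 6 * qi 2 / (qi 5 * qi 3)) * X 0,
      X 0 * X 2 - C (qi 7) * X 0,
      X 0 * X 1,
      X 2 * X 2 - (C (qi 3) + C (qi 4 / qi 2) * X 2 + C (qi 4) * X 0 + C (qi 4) * X 1),
      X 2 * X 1 + C (qi 5) * X 1,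
      X 1 * X 1 - C (qi 2 ^ 2 * qi 6 / qi 3) * X 1 }

/-!
The relations rewrite the product of any of `1, U, K, H` with a generator as a linear
combination of `1, U, K, H`, so these four elements span `A(2)`. For independence, `A(2)` has
four characters, one for each irreducible summand of `Δ ⊗ Δ`: `(U, K, H)` is sent to
`(c₁, 0, [7])`, `(0, c₂, -[5])`, `(0, 0, [3])` and `(0, 0, -1)`, where `c₁ = [10][6][2]/([5][3])`
and `c₂ = [2]²[6]/[3]`. Evaluating `1, U, K, H` at them gives a `4 × 4` matrix of determinant
`-c₁ c₂ [2]²`, which is nonzero.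
-/

open Finset MvPolynomial

lemma q_ne_zero : q ≠ 0 := RatFunc.X_ne_zero

lemma q_pow_ne_one {n : ℕ} (hn : n ≠ 0) : q ^ n ≠ 1 := by
  rw [q, ← RatFunc.algebraMap_X, ← map_pow, ← map_one (algebraMap (Polynomial ℚ) (RatFunc ℚ)),
    (RatFunc.algebraMap_injective ℚ).ne_iff]
  intro h
  simpa [hn] using congrArg Polynomial.natDegree h

lemma q_pow_sub_inv_ne_zero {n : ℕ} (hn : n ≠ 0) : q ^ n - (q ^ n)⁻¹ ≠ 0 := by
  rw [sub_ne_zero]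
  intro h
  apply q_pow_ne_one (n := n + n) (by omega)
  rw [pow_add]
  nth_rw 2 [h]
  exact mul_inv_cancel₀ (pow_ne_zero n q_ne_zero)

lemma q_sub_inv_ne_zero : q - q⁻¹ ≠ 0 := by
  simpa using q_pow_sub_inv_ne_zero one_ne_zero

lemma qi_neg (n : ℤ) : qi (-n) = -qi n := by
  rw [qi, qi, neg_neg, ← neg_div, neg_sub]

lemma qi_natCast_ne_zero {n : ℕ} (hn : n ≠ 0) : qi n ≠ 0 := by
  rw [qi, zpow_neg, zpow_natCast]
  exact div_ne_zero (q_pow_sub_inv_ne_zero hn) q_sub_inv_ne_zero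

lemma qi_ne_zero {n : ℤ} (hn : n ≠ 0) : qi n ≠ 0 := by
  obtain ⟨m, rfl | rfl⟩ := Int.eq_nat_or_neg n
  · exact qi_natCast_ne_zero (by omega)
  · rw [qi_neg, neg_ne_zero]
    exact qi_natCast_ne_zero (by omega)

lemma qi_natCast (n : ℕ) : qi n = (∑ k ∈ range n, q ^ (2 * k)) / q ^ (n - 1) := by
  obtain _ | m := n
  · simp [qi]
  have geom : (∑ k ∈ range (m + 1), q ^ (2 * k)) * (q ^ 2 - 1) = q ^ (2 * (m + 1)) - 1 := by
    simp_rw [pow_mul]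
    exact geom_sum_mul _ _
  rw [qi, zpow_neg, zpow_natCast, Nat.add_sub_cancel,
    div_eq_div_iff q_sub_inv_ne_zero (pow_ne_zero m q_ne_zero)]
  field_simp [q_ne_zero]
  linear_combination -(q ^ (m + 1)) * geom

-- `no_index` lets `simp` expand numerals such as `qi 7` into Laurent polynomials in `q`.
lemma qi_ofNat (n : ℕ) :
    qi (no_index (OfNat.ofNat n)) = (∑ k ∈ range n, q ^ (2 * k)) / q ^ (n - 1) :=
  qi_natCast n

lemma qi_three_add_one : qi 3 + 1 = qi 2 ^ 2 := by
  simp only [qi_ofNat, sum_range_succ, sum_range_zero]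
  field_simp [q_ne_zero]
  ring

lemma MvPolynomial.quotient_submodule_eq_top {R σ : Type*} [CommRing R]
    {I : Ideal (MvPolynomial σ R)} {S : Submodule R (MvPolynomial σ R ⧸ I)} (one_mem : 1 ∈ S)
    (mul_X_mem : ∀ i, ∀ s ∈ S, s * Ideal.Quotient.mk I (X i) ∈ S) : S = ⊤ := by
  refine Submodule.eq_top_iff'.mpr fun x => ?_
  obtain ⟨p, rfl⟩ := Ideal.Quotient.mk_surjective x
  induction p using MvPolynomial.induction_on with
  | C a =>
    rw [← algebraMap_eq, Ideal.Quotient.mk_algebraMap, Algebra.algebraMap_eq_smul_one]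
    exact S.smul_mem a one_mem
  | add p r hp hr => rw [map_add]; exact S.add_mem hp hr
  | mul_X p i hp => rw [map_mul]; exact mul_X_mem i _ hp

lemma Submodule.mul_mem_span_range {R A ι : Type*} [CommSemiring R] [Semiring A] [Algebra R A]
    {v : ι → A} {x : A} (h : ∀ j, v j * x ∈ span R (Set.range v)) {s : A}
    (hs : s ∈ span R (Set.range v)) : s * x ∈ span R (Set.range v) := by
  have : span R (Set.range v) ≤ (span R (Set.range v)).comap (LinearMap.mulRight R x) :=
    span_le.mpr (Set.range_subset_iff.mpr h)
  exact this hs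

namespace A2

structure Relations {A : Type*} [CommRing A] [Algebra (RatFunc ℚ) A] (u k h : A) : Prop where
  u_mul_u : u * u = (qi 10 * qi 6 * qi 2 / (qi 5 * qi 3)) • u
  u_mul_h : u * h = qi 7 • u
  u_mul_k : u * k = 0
  h_mul_h : h * h = algebraMap (RatFunc ℚ) A (qi 3) + (qi 4 / qi 2) • h + qi 4 • u + qi 4 • k
  h_mul_k : h * k = -qi 5 • k
  k_mul_k : k * k = (qi 2 ^ 2 * qi 6 / qi 3) • k

lemma relations_iff_le_ker {A : Type*} [CommRing A] [Algebra (RatFunc ℚ) A] (x : Fin 3 → A) :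
    Relations (x 0) (x 1) (x 2) ↔ A2rel ≤ RingHom.ker (aeval x) := by
  simp only [A2rel, Ideal.span_le, Set.insert_subset_iff, Set.singleton_subset_iff,
    SetLike.mem_coe, RingHom.mem_ker, map_sub, map_add, map_mul, aeval_X, aeval_C,
    ← Algebra.smul_def, sub_eq_zero, add_eq_zero_iff_eq_neg, ← neg_smul]
  exact ⟨fun ⟨h₁, h₂, h₃, h₄, h₅, h₆⟩ => ⟨h₁, h₂, h₃, h₄, h₅, h₆⟩,
    fun ⟨h₁, h₂, h₃, h₄, h₅, h₆⟩ => ⟨h₁, h₂, h₃, h₄, h₅, h₆⟩⟩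

local notation "𝒜" => MvPolynomial (Fin 3) (RatFunc ℚ) ⧸ A2rel
local notation "mk" => Ideal.Quotient.mk A2rel

lemma relations_mk : Relations (mk (X 0)) (mk (X 1)) (mk (X 2)) := by
  have : aeval (fun i => mk (X i)) = Ideal.Quotient.mkₐ (RatFunc ℚ) A2rel :=
    algHom_ext fun i => by simp [Ideal.Quotient.mkₐ_eq_mk]
  rw [relations_iff_le_ker (fun i => mk (X i)), this]
  exact fun p hp => Ideal.Quotient.eq_zero_iff_mem.mpr hp

noncomputable def basisVec : Fin 4 → 𝒜 := ![1, mk (X 0), mk (X 1), mk (X 2)]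

lemma basisVec_mul_X_mem {S : Submodule (RatFunc ℚ) 𝒜} (h1 : 1 ∈ S) (hU : mk (X 0) ∈ S)
    (hK : mk (X 1) ∈ S) (hH : mk (X 2) ∈ S) (i : Fin 3) (j : Fin 4) :
    basisVec j * mk (X i) ∈ S := by
  have rel := relations_mk
  fin_cases i <;> fin_cases j <;>
    simp only [basisVec, Fin.zero_eta, Fin.mk_one, Fin.reduceFinMk, Matrix.cons_val, one_mul,
      mul_comm (mk (X 1)) (mk (X 0)), mul_comm (mk (X 2)) (mk (X 0)),
      mul_comm (mk (X 1)) (mk (X 2)), rel.u_mul_u, rel.u_mul_h, rel.u_mul_k, rel.h_mul_h,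
      rel.h_mul_k, rel.k_mul_k, Algebra.algebraMap_eq_smul_one] <;>
    apply_rules [Submodule.add_mem, Submodule.smul_mem, Submodule.zero_mem]

lemma span_basisVec : Submodule.span (RatFunc ℚ) (Set.range basisVec) = ⊤ := by
  have mem (j : Fin 4) : basisVec j ∈ Submodule.span (RatFunc ℚ) (Set.range basisVec) :=
    Submodule.subset_span ⟨j, rfl⟩
  exact MvPolynomial.quotient_submodule_eq_top (mem 0) fun i s hs =>
    Submodule.mul_mem_span_range (basisVec_mul_X_mem (mem 0) (mem 1) (mem 2) (mem 3) i) hs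

-- `character i j` is the value of the `i`-th generator (`U`, `K`, `H`) at the `j`-th character.
noncomputable def character : Fin 3 → Fin 4 → RatFunc ℚ :=
  ![![qi 10 * qi 6 * qi 2 / (qi 5 * qi 3), 0, 0, 0],
    ![0, qi 2 ^ 2 * qi 6 / qi 3, 0, 0],
    ![qi 7, -qi 5, qi 3, -1]]

lemma character_two_mul_self (j : Fin 4) :
    character 2 j * character 2 j =
      qi 3 + qi 4 / qi 2 * character 2 j + qi 4 * character 0 j + qi 4 * character 1 j := by
  have h2 := qi_ne_zero (n := 2) (by norm_num)
  have h3 := qi_ne_zero (n := 3) (by norm_num)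
  have h5 := qi_ne_zero (n := 5) (by norm_num)
  fin_cases j <;>
    simp only [character, Fin.isValue, Fin.zero_eta, Fin.mk_one, Fin.reduceFinMk,
      Matrix.cons_val', Matrix.cons_val_zero, Matrix.cons_val_one, Matrix.cons_val_fin_one,
      Matrix.cons_val, mul_zero, add_zero] <;>
    field_simp <;>
    simp only [qi_ofNat, sum_range_succ, sum_range_zero] <;>
    field_simp [q_ne_zero] <;>
    ring

lemma relations_character : Relations (character 0) (character 1) (character 2) := by
  constructor
  case h_mul_h =>
    funext j
    simpa only [Pi.add_apply, Pi.mul_apply, Pi.smul_apply, smul_eq_mul, Pi.algebraMap_apply,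
      Algebra.algebraMap_self, RingHom.id_apply] using character_two_mul_self j
  all_goals funext j; fin_cases j <;> simp [character, mul_comm]

noncomputable def characterMap : 𝒜 →ₐ[RatFunc ℚ] (Fin 4 → RatFunc ℚ) :=
  Ideal.Quotient.liftₐ A2rel (aeval character) fun _ ha =>
    (relations_iff_le_ker character).mp relations_character ha

lemma characterMap_mk (p : MvPolynomial (Fin 3) (RatFunc ℚ)) :
    characterMap (mk p) = aeval character p :=
  rfl

lemma characterMap_basisVec (j : Fin 4) :
    characterMap (basisVec j) = ![1, character 0, character 1, character 2] j := by
  fin_cases j <;> simp [basisVec, characterMap_mk]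

noncomputable def characterMatrix : Matrix (Fin 4) (Fin 4) (RatFunc ℚ) :=
  Matrix.of ![1, character 0, character 1, character 2]

lemma det_characterMatrix : characterMatrix.det =
    -(qi 10 * qi 6 * qi 2 / (qi 5 * qi 3) * (qi 2 ^ 2 * qi 6 / qi 3) * (qi 3 + 1)) := by
  rw [Matrix.det_succ_row_zero]
  simp only [characterMatrix, character, Matrix.of_apply, Matrix.submatrix_apply,
    Matrix.det_fin_three, Fin.sum_univ_succ, Fin.sum_univ_zero, Fin.succAbove, Matrix.cons_val,
    Matrix.cons_val', Matrix.cons_val_zero, Matrix.cons_val_one, Matrix.cons_val_fin_one,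
    Pi.one_apply, Fin.val_zero, Fin.val_succ, Fin.reduceSucc, Fin.reduceCastSucc, Fin.reduceLT,
    Fin.succ_zero_eq_one, Fin.succ_one_eq_two, Fin.castSucc_zero, Fin.castSucc_one, ite_true,
    ite_false]
  ring

lemma det_characterMatrix_ne_zero : characterMatrix.det ≠ 0 := by
  rw [det_characterMatrix, qi_three_add_one]
  simp [qi_ne_zero]

lemma linearIndependent_basisVec : LinearIndependent (RatFunc ℚ) basisVec := by
  refine LinearIndependent.of_comp characterMap.toLinearMap ?_
  have : characterMap.toLinearMap ∘ basisVec = fun j => characterMatrix j :=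
    funext characterMap_basisVec
  rw [this]
  exact Matrix.linearIndependent_rows_of_det_ne_zero det_characterMatrix_ne_zero

end A2

/-- `A(2)` is a free `ℚ(q)`-module of rank `4` with basis `{1, U, K, H}`. -/
theorem A2_free_rank_four :
    ∃ b : Module.Basis (Fin 4) (RatFunc ℚ) (MvPolynomial (Fin 3) (RatFunc ℚ) ⧸ A2rel),
      b 0 = 1 ∧
      b 1 = Ideal.Quotient.mk A2rel (MvPolynomial.X 0) ∧
      b 2 = Ideal.Quotient.mk A2rel (MvPolynomial.X 1) ∧
      b 3 = Ideal.Quotient.mk A2rel (MvPolynomial.X 2) := by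
  refine ⟨Module.Basis.mk A2.linearIndependent_basisVec A2.span_basisVec.ge, ?_, ?_, ?_, ?_⟩ <;>
    simp [A2.basisVec]
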